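/- Let 𝒞 be a class of graphs with bounded star chromatic number. Then the monotone closure of 𝒞 is a non-copying immersive transduction of 𝒞, i.e. there is a non-copying immersive transduction T such that every subgraph of a member of 𝒞 belongs to T(𝒞). -/

import Mathlib

open SimpleGraph

/-! ### Finite graphs and colored graphs -/

/-- A finite simple graph. -/
structure FGraph : Type 1 where
  V : Type
  [fin : Finite V]
  G : SimpleGraph V

attribute [instance] FGraph.fin

/-- A finite simple graph colored by `c` unary predicates. -/
structure CGraph (c : ℕ) : Type 1 where
  V : Type
  [fin : Finite V]
  G : SimpleGraph V
  color : Fin c → Set V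

attribute [instance] CGraph.fin

/-! ### First-order formulas over `c`-colored graphs -/

/-- First-order formulas in the language of graphs with `c` unary predicates,
with free variables among `Fin m`. -/
inductive Fml (c : ℕ) : ℕ → Type where
  | eq {m} : Fin m → Fin m → Fml c m
  | adj {m} : Fin m → Fin m → Fml c m
  | col {m} : Fin c → Fin m → Fml c m
  | not {m} : Fml c m → Fml c m
  | or {m} : Fml c m → Fml c m → Fml c m
  | ex {m} : Fml c (m + 1) → Fml c m

/-- Satisfaction of a first-order formula in a colored graph. -/
def Fml.Sat {c : ℕ} (A : CGraph c) : {m : ℕ} → Fml c m → (Fin m → A.V) → Prop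
  | _, .eq i j, v => v i = v j
  | _, .adj i j, v => A.G.Adj (v i) (v j)
  | _, .col i x, v => v x ∈ A.color i
  | _, .not φ, v => ¬ Fml.Sat A φ v
  | _, .or φ ψ, v => Fml.Sat A φ v ∨ Fml.Sat A ψ v
  | _, .ex φ, v => ∃ w : A.V, Fml.Sat A φ (Fin.snoc v w)

/-! ### Simple interpretations and transductions -/

/-- A simple interpretation of graphs in `c`-colored graphs: a pair of formulas
`(ν(x), η(x,y))` with `η` symmetric and anti-reflexive. -/
structure Interp (c : ℕ) where
  ν : Fml c 1
  η : Fml c 2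
  symm : ∀ (A : CGraph c) (u v : A.V), Fml.Sat A η ![u, v] → Fml.Sat A η ![v, u]
  irrefl : ∀ (A : CGraph c) (v : A.V), ¬ Fml.Sat A η ![v, v]

/-- The graph interpreted in a colored graph. -/
def Interp.result {c : ℕ} (I : Interp c) (A : CGraph c) :
    SimpleGraph {v : A.V // Fml.Sat A I.ν ![v]} where
  Adj u v := Fml.Sat A I.η ![u.1, v.1]
  symm := ⟨fun u v h => I.symm A u.1 v.1 h⟩
  loopless := ⟨fun v h => I.irrefl A v.1 h⟩

/-- The `k`-copy operation on graphs: the copies of a vertex form a clique, and copies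
with the same index are adjacent iff the original vertices are. -/
def copyGraph {V : Type} (G : SimpleGraph V) (k : ℕ) : SimpleGraph (V × Fin k) where
  Adj a b := (a.1 = b.1 ∧ a.2 ≠ b.2) ∨ (G.Adj a.1 b.1 ∧ a.2 = b.2)
  symm := by
    constructor
    rintro a b (⟨h1, h2⟩ | ⟨h1, h2⟩)
    · exact Or.inl ⟨h1.symm, h2.symm⟩
    · exact Or.inr ⟨h1.symm, h2.symm⟩
  loopless := by
    constructor
    rintro a (⟨_, h⟩ | ⟨h, _⟩)
    · exact h rfl
    · exact G.loopless.irrefl _ h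

/-- The `k`-copy operation on finite graphs. -/
def FGraph.copy (G : FGraph) (k : ℕ) : FGraph where
  V := G.V × Fin k
  G := copyGraph G.G k

/-- A transduction: a composition `I ∘ Γ_𝒰 ∘ C_k` of a copy operation, a coloring
operation and a simple interpretation. -/
structure Transduction where
  k : ℕ
  kpos : 0 < k
  c : ℕ
  I : Interp c

/-- The colored graph obtained from `C_k(G)` by a choice of coloring. -/
def Transduction.copyCGraph (T : Transduction) (G : FGraph)
    (color : Fin T.c → Set (G.V × Fin T.k)) : CGraph T.c where
  V := G.V × Fin T.k
  G := copyGraph G.G T.k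
  color := color

/-- `H ∈ T(G)` (up to isomorphism). -/
def Transduction.mem (T : Transduction) (G H : FGraph) : Prop :=
  ∃ color : Fin T.c → Set (G.V × Fin T.k),
    Nonempty (H.G ≃g T.I.result (T.copyCGraph G color))

/-- The image `T(𝒟)` of a class of graphs under a transduction. -/
def TImage (T : Transduction) (D : Set FGraph) : Set FGraph :=
  {H | ∃ G ∈ D, T.mem G H}

/-- `𝒞 ⊑_FO 𝒟` : `𝒞` is a first-order transduction of `𝒟`. -/
def SqFO (C D : Set FGraph) : Prop := ∃ T : Transduction, C ⊆ TImage T D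

/-- `𝒞 ⊑°_FO 𝒟` : `𝒞` is a non-copying first-order transduction of `𝒟`. -/
def SqFOnc (C D : Set FGraph) : Prop := ∃ T : Transduction, T.k = 1 ∧ C ⊆ TImage T D

/-- `𝒞 ≡_FO 𝒟`. -/
def EquivFO (C D : Set FGraph) : Prop := SqFO C D ∧ SqFO D C

/-- `T'` subsumes `T` : `T'(G) ⊇ T(G)` for every graph `G`. -/
def Subsumes (T' T : Transduction) : Prop := ∀ G H : FGraph, T.mem G H → T'.mem G H

/-! ### Perturbations -/

/-- The subset complementation `⊕M`: complement the adjacency between distinct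
vertices that both belong to `M`. -/
def scompGraph {V : Type} (G : SimpleGraph V) (M : Set V) : SimpleGraph V where
  Adj u v := u ≠ v ∧ (G.Adj u v ↔ ¬(u ∈ M ∧ v ∈ M))
  symm := by
    constructor
    rintro u v ⟨h1, h2⟩
    refine ⟨h1.symm, ?_, ?_⟩
    · intro h hm
      exact (h2.mp (G.adj_symm h)) ⟨hm.2, hm.1⟩
    · intro h
      exact G.adj_symm (h2.mpr fun hm => h ⟨hm.2, hm.1⟩)
  loopless := ⟨fun v h => h.1 rfl⟩

/-- Applying a finite sequence of subset complementations. -/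
def perturbGraph {V : Type} : List (Set V) → SimpleGraph V → SimpleGraph V
  | [], G => G
  | M :: Ms, G => perturbGraph Ms (scompGraph G M)

/-- `H ∈ P(G)` for a perturbation `P` that is the composition of `p` subset
complementations (up to isomorphism). -/
def PerturbMem (p : ℕ) (G H : FGraph) : Prop :=
  ∃ Z : Fin p → Set G.V, Nonempty (H.G ≃g perturbGraph (List.ofFn Z) G.G)

/-- The image `P(𝒟)` of a class under a perturbation with `p` marks. -/
def PerturbImage (p : ℕ) (D : Set FGraph) : Set FGraph :=
  {H | ∃ G ∈ D, PerturbMem p G H}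

/-- `𝒞` is a perturbation of `𝒟`. -/
def IsPerturbationOfClass (C D : Set FGraph) : Prop := ∃ p, C ⊆ PerturbImage p D

/-! ### Locality -/

/-- The ball of radius `r` around a set `S` of vertices. -/
def ballSet {V : Type} (G : SimpleGraph V) (r : ℕ) (S : Set V) : Set V :=
  {v | ∃ u ∈ S, G.Reachable u v ∧ G.dist u v ≤ r}

lemma mem_ballSet_self {V : Type} (G : SimpleGraph V) (r : ℕ) {S : Set V} {v : V}
    (hv : v ∈ S) : v ∈ ballSet G r S :=
  ⟨v, hv, Reachable.refl v, by rw [SimpleGraph.dist_self]; exact Nat.zero_le r⟩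

/-- The colored subgraph induced on a set of vertices. -/
def CGraph.induce {c : ℕ} (A : CGraph c) (S : Set A.V) : CGraph c where
  V := ↥S
  G := A.G.induce S
  color := fun i => {v | (v : A.V) ∈ A.color i}

/-- A formula is `r`-local if its truth only depends on the subgraph induced by the
ball of radius `r` around its free variables. -/
def IsLocalFml {c m : ℕ} (r : ℕ) (φ : Fml c m) : Prop :=
  ∀ (A : CGraph c) (v : Fin m → A.V),
    Fml.Sat A φ v ↔
      Fml.Sat (A.induce (ballSet A.G r (Set.range v))) φ
        (fun i => ⟨v i, mem_ballSet_self A.G r (Set.mem_range_self i)⟩)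

/-- A formula is strongly `r`-local if it is `r`-local and, whenever it holds of a
tuple, the entries of the tuple are pairwise at distance at most `r`. -/
def IsStronglyLocalFml {c m : ℕ} (r : ℕ) (φ : Fml c m) : Prop :=
  IsLocalFml r φ ∧
    ∀ (A : CGraph c) (v : Fin m → A.V), Fml.Sat A φ v →
      ∀ i j : Fin m, A.G.Reachable (v i) (v j) ∧ A.G.dist (v i) (v j) ≤ r

/-- An immersive transduction: non-copying, with strongly local formulas. -/
def Transduction.Immersive (T : Transduction) : Prop :=
  T.k = 1 ∧ ∃ r : ℕ, IsStronglyLocalFml r T.I.ν ∧ IsStronglyLocalFml r T.I.η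

/-! ### Graph classes -/

/-- A set of graphs closed under isomorphism. -/
def IsoClosed (C : Set FGraph) : Prop :=
  ∀ G H : FGraph, Nonempty (G.G ≃g H.G) → G ∈ C → H ∈ C

/-- `H` is (isomorphic to) an induced subgraph of `G`. -/
def IsInducedSubgraphOf (H G : FGraph) : Prop :=
  ∃ f : H.V → G.V, Function.Injective f ∧ ∀ u v, H.G.Adj u v ↔ G.G.Adj (f u) (f v)

/-- A hereditary class: closed under induced subgraphs. -/
def HereditaryClass (C : Set FGraph) : Prop :=
  ∀ G ∈ C, ∀ H : FGraph, IsInducedSubgraphOf H G → H ∈ C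

/-- `H` is (isomorphic to) a subgraph of `G`. -/
def IsSubgraphOf (H G : FGraph) : Prop :=
  ∃ f : H.V → G.V, Function.Injective f ∧ ∀ u v, H.G.Adj u v → G.G.Adj (f u) (f v)

/-- The monotone closure of a class: all subgraphs of its members. -/
def monotoneClosure (C : Set FGraph) : Set FGraph :=
  {H | ∃ G ∈ C, IsSubgraphOf H G}

/-- `G` contains `K_{t,t}` as a subgraph. -/
def HasKtt {V : Type} (G : SimpleGraph V) (t : ℕ) : Prop :=
  ∃ a b : Fin t → V, Function.Injective a ∧ Function.Injective b ∧
    (∀ i j, a i ≠ b j) ∧ ∀ i j, G.Adj (a i) (b j)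

/-- A weakly sparse class: some `K_{t,t}` is a subgraph of no member. -/
def WeaklySparse (C : Set FGraph) : Prop := ∃ t : ℕ, ∀ G ∈ C, ¬ HasKtt G.G t

/-- Disjoint union of two graphs. -/
def sumGraph {V W : Type} (G : SimpleGraph V) (H : SimpleGraph W) : SimpleGraph (V ⊕ W) where
  Adj a b := match a, b with
    | .inl u, .inl v => G.Adj u v
    | .inr u, .inr v => H.Adj u v
    | _, _ => False
  symm := by
    constructor
    rintro (u | u) (v | v) h
    · exact G.adj_symm h
    · exact h.elim
    · exact h.elim
    · exact H.adj_symm h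
  loopless := by
    constructor
    rintro (v | v) h
    · exact G.loopless.irrefl _ h
    · exact H.loopless.irrefl _ h

/-- Disjoint union of finite graphs. -/
def FGraph.disjUnion (G H : FGraph) : FGraph where
  V := G.V ⊕ H.V
  G := sumGraph G.G H.G

/-- An addable class: closed under disjoint unions. -/
def Addable (C : Set FGraph) : Prop :=
  ∀ G ∈ C, ∀ H ∈ C, FGraph.disjUnion G H ∈ C

/-- The degree of a vertex. -/
noncomputable def degCard (G : FGraph) (v : G.V) : ℕ := Nat.card {u : G.V // G.G.Adj v u}

/-- A class with bounded maximum degree. -/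
def BddDegree (C : Set FGraph) : Prop := ∃ D : ℕ, ∀ G ∈ C, ∀ v : G.V, degCard G v ≤ D
/-! ### Further graph constructions and parameters -/

/-- Auxiliary instance. -/
instance {α : Type} [Finite α] : Finite (Option α) :=
  Finite.of_equiv _ (Equiv.optionEquivSumPUnit.{0,0} α).symm

/-- Adding an apex vertex adjacent to all vertices. -/
def apexGraph {V : Type} (G : SimpleGraph V) : SimpleGraph (Option V) where
  Adj a b := match a, b with
    | none, none => False
    | none, some _ => True
    | some _, none => True
    | some u, some v => G.Adj u v
  symm := by
    constructor
    rintro (_ | u) (_ | v) h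
    · exact h.elim
    · trivial
    · trivial
    · exact G.adj_symm h
  loopless := by
    constructor
    rintro (_ | v) h
    · exact h.elim
    · exact G.loopless.irrefl _ h

/-- The class `𝒞 ∨ K₁` of graphs of `𝒞` with an added apex. -/
def JoinK1 (C : Set FGraph) : Set FGraph :=
  {H | ∃ G ∈ C, Nonempty (H.G ≃g apexGraph G.G)}

/-- The ball of radius `r` around a vertex, as a finite graph. -/
def ballFGraph (G : FGraph) (r : ℕ) (v : G.V) : FGraph where
  V := ↥(ballSet G.G r {v})
  G := G.G.induce (ballSet G.G r {v})

/-- The class `𝓛_r(ℱ)` of all balls of radius `r` of graphs of `ℱ`. -/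
def LocClass (r : ℕ) (F : Set FGraph) : Set FGraph :=
  {H | ∃ G ∈ F, ∃ v : G.V, Nonempty (H.G ≃g (ballFGraph G r v).G)}

/-- Adding a pendant vertex adjacent only to `v`. -/
def pendantGraph {V : Type} (G : SimpleGraph V) (v : V) : SimpleGraph (Option V) where
  Adj a b := match a, b with
    | none, none => False
    | none, some w => w = v
    | some u, none => u = v
    | some u, some w => G.Adj u w
  symm := by
    constructor
    rintro (_ | u) (_ | w) h
    · exact h.elim
    · exact h
    · exact h
    · exact G.adj_symm h
  loopless := by
    constructor
    rintro (_ | w) h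
    · exact h.elim
    · exact G.loopless.irrefl _ h

/-- The finite graph obtained by adding a pendant vertex at `v`. -/
def FGraph.addPendant (G : FGraph) (v : G.V) : FGraph where
  V := Option G.V
  G := pendantGraph G.G v

/-- `G` is obtained from `H` by adding at most `h` vertices, joined arbitrarily. -/
def NearlyOf (h : ℕ) (G H : FGraph) : Prop :=
  ∃ f : H.V → G.V, Function.Injective f ∧
    (∀ u v, H.G.Adj u v ↔ G.G.Adj (f u) (f v)) ∧
    Nat.card {v : G.V // v ∉ Set.range f} ≤ h

/-- The class `𝒞` is nearly `𝒟`. -/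
def Nearly (C D : Set FGraph) : Prop :=
  ∃ h : ℕ, ∀ G ∈ C, ∃ H ∈ D, NearlyOf h G H

/-- The class `ℰ` of all edgeless graphs. -/
def EdgelessClass : Set FGraph := {G | ∀ u v : G.V, ¬ G.G.Adj u v}

/-- All members of the class have connected components of bounded size. -/
def BddComponents (D : Set FGraph) : Prop :=
  ∃ n : ℕ, ∀ G ∈ D, ∀ v : G.V, Nat.card {u : G.V // G.G.Reachable v u} ≤ n

/-- The class of all cubic (3-regular) graphs. -/
def CubicClass : Set FGraph := {G | ∀ v : G.V, degCard G v = 3}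

/-- The class `𝒫` of all paths. -/
def PathClass : Set FGraph :=
  {G | ∃ n : ℕ, Nonempty (G.G ≃g SimpleGraph.pathGraph n)}

/-- The `ℓ`-th power of a graph: two vertices are adjacent iff their distance
is between `1` and `ℓ`. -/
def powGraph {V : Type} (G : SimpleGraph V) (ℓ : ℕ) : SimpleGraph V where
  Adj u v := u ≠ v ∧ G.Reachable u v ∧ G.dist u v ≤ ℓ
  symm := by
    constructor
    rintro u v ⟨h1, h2, h3⟩
    exact ⟨h1.symm, h2.symm, by rwa [SimpleGraph.dist_comm]⟩
  loopless := ⟨fun v h => h.1 rfl⟩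

/-- The bandwidth of `G` is at most `ℓ` : `G` is a subgraph of the `ℓ`-th power
of a path. -/
def BandwidthLE (G : FGraph) (ℓ : ℕ) : Prop :=
  ∃ n : ℕ, ∃ f : G.V → Fin n, Function.Injective f ∧
    ∀ u v, G.G.Adj u v → (powGraph (SimpleGraph.pathGraph n) ℓ).Adj (f u) (f v)

/-- A class with bounded bandwidth. -/
def BddBandwidth (D : Set FGraph) : Prop := ∃ ℓ : ℕ, ∀ G ∈ D, BandwidthLE G ℓ

/-- The class of all cubic trees: trees all of whose vertices have degree 3 or 1. -/
def CubicTreeClass : Set FGraph :=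
  {G | G.G.IsTree ∧ ∀ v : G.V, degCard G v = 3 ∨ degCard G v = 1}

/-- `H` contains a clique on `s` vertices. -/
def HasCliqueN {V : Type} (H : SimpleGraph V) (s : ℕ) : Prop :=
  ∃ f : Fin s → V, Function.Injective f ∧ ∀ i j, i ≠ j → H.Adj (f i) (f j)

/-- A chordal graph: no induced cycle of length at least 4. -/
def IsChordal {V : Type} (H : SimpleGraph V) : Prop :=
  ∀ n : ℕ, 4 ≤ n → ¬ ∃ f : Fin n → V, Function.Injective f ∧
    ∀ i j, (SimpleGraph.cycleGraph n).Adj i j ↔ H.Adj (f i) (f j)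

/-- `tw(G) ≤ n` : `G` is a subgraph of a chordal graph with clique number at most `n+1`. -/
def TreewidthLE (G : FGraph) (n : ℕ) : Prop :=
  ∃ H : SimpleGraph G.V, IsChordal H ∧ G.G ≤ H ∧ ¬ HasCliqueN H (n + 2)

/-- A class with bounded treewidth. -/
def BddTreewidth (D : Set FGraph) : Prop := ∃ n : ℕ, ∀ G ∈ D, TreewidthLE G n

/-- An interval graph: the intersection graph of a family of real intervals. -/
def IsIntervalGraph {V : Type} (H : SimpleGraph V) : Prop :=
  ∃ l r : V → ℝ, (∀ v, l v ≤ r v) ∧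
    ∀ u v, u ≠ v → (H.Adj u v ↔ (l u ≤ r v ∧ l v ≤ r u))

/-- `pw(G) ≤ n` : `G` is a subgraph of an interval graph with clique number at
most `n+1`. -/
def PathwidthLE (G : FGraph) (n : ℕ) : Prop :=
  ∃ H : SimpleGraph G.V, IsIntervalGraph H ∧ G.G ≤ H ∧ ¬ HasCliqueN H (n + 2)

/-- The class `𝒫𝒲_n` of all graphs of pathwidth at most `n`. -/
def PWClass (n : ℕ) : Set FGraph := {G | PathwidthLE G n}

/-- `G` is a forest of depth at most `n` : it is acyclic and roots may be chosen,
one in each connected component, such that every vertex is at distance at most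
`n - 1` from the root of its component. -/
def ForestDepthLE (n : ℕ) (G : FGraph) : Prop :=
  G.G.IsAcyclic ∧ ∃ ρ : G.V → G.V,
    (∀ v, G.G.Reachable (ρ v) v ∧ G.G.dist (ρ v) v ≤ n - 1) ∧
    ∀ u v, G.G.Reachable u v → ρ u = ρ v

/-- The class `𝒯_n` of forests of depth at most `n`. -/
def TreeDepthClass (n : ℕ) : Set FGraph := {G | ForestDepthLE n G}

/-- A star forest: an acyclic graph with no path on four distinct vertices. -/
def IsStarForest (G : FGraph) : Prop :=
  G.G.IsAcyclic ∧ ∀ a b c d : G.V, G.G.Adj a b → G.G.Adj b c → G.G.Adj c d →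
    a = c ∨ b = d ∨ a = d

/-- The class `𝒯₂` of all star forests. -/
def StarForestClass : Set FGraph := {G | IsStarForest G}

/-- `H` is a depth-`r` shallow minor of `G` : it is obtained by contracting
pairwise disjoint connected subgraphs of radius at most `r` and deleting
vertices and edges. -/
def IsShallowMinor (r : ℕ) (H G : FGraph) : Prop :=
  ∃ φ : H.V → Set G.V,
    (∀ v, (φ v).Nonempty) ∧
    (∀ u v, u ≠ v → Disjoint (φ u) (φ v)) ∧
    (∀ v : H.V, ∃ c : ↥(φ v), ∀ u : ↥(φ v),
      (G.G.induce (φ v)).Reachable c u ∧ (G.G.induce (φ v)).dist c u ≤ r) ∧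
    (∀ u v : H.V, H.G.Adj u v → ∃ a ∈ φ u, ∃ b ∈ φ v, G.G.Adj a b)

/-- The average degree of `H` is at most `d`. -/
def AvgDegLE (H : FGraph) (d : ℕ) : Prop :=
  2 * Nat.card H.G.edgeSet ≤ d * Nat.card H.V

/-- A class of bounded expansion: for some `f : ℕ → ℕ`, every depth-`r` shallow
minor of a member has average degree at most `f r`. -/
def BoundedExpansion (C : Set FGraph) : Prop :=
  ∃ f : ℕ → ℕ, ∀ r : ℕ, ∀ G ∈ C, ∀ H : FGraph, IsShallowMinor r H G → AvgDegLE H (f r)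

/-- A proper coloring `f` of `G` with `n` colors is a star coloring if no path on
four vertices receives only two colors. -/
def IsStarColoring {V : Type} (G : SimpleGraph V) (n : ℕ) (f : V → Fin n) : Prop :=
  (∀ u v, G.Adj u v → f u ≠ f v) ∧
  ∀ a b c d, G.Adj a b → G.Adj b c → G.Adj c d → a ≠ c → b ≠ d → a ≠ d →
    ¬ (f a = f c ∧ f b = f d)

/-- A class with bounded star chromatic number. -/
def BddStarChrom (C : Set FGraph) : Prop :=
  ∃ n : ℕ, ∀ G ∈ C, ∃ f : G.V → Fin n, IsStarColoring G.G n f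

/-! Fix a star colouring `g` of `G` with `n` colours and a subgraph `H` of `G`. For every edge
`xy` of `H` one endpoint, say `x`, is the only `G`-neighbour of `y` of colour `g x`: otherwise a
neighbour `z₁ ≠ x` of `y` coloured like `x` and a neighbour `z₂ ≠ y` of `x` coloured like `y`
form a two-coloured path `z₂ x y z₁`. Hence `H` is determined by the colour classes of `g`, the
vertex set of `H` and the sets `P i` of vertices having an `H`-neighbour of colour `i`: `xy` is an
edge of `H` iff it is an edge of `G` between vertices of `H` and, for one endpoint `y ∈ P i`, the
other is the only neighbour of `y` of colour `i`. A transduction guesses these `2n + 1` colour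
classes, and the condition on `xy` inspects only neighbours of `x` and `y`, so it is strongly
1-local. -/

namespace Fml

variable {c : ℕ}

def and {m : ℕ} (φ ψ : Fml c m) : Fml c m := .not (.or (.not φ) (.not ψ))

def bot {m : ℕ} : Fml c m := .ex (.not (.eq (Fin.last m) (Fin.last m)))

def iOr {m : ℕ} : {k : ℕ} → (Fin k → Fml c m) → Fml c m
  | 0, _ => bot
  | _ + 1, φ => .or (φ 0) (iOr fun i => φ i.succ)

lemma sat_comp_equiv {m : ℕ} {A B : CGraph c} (e : A.V ≃ B.V)
    (hadj : ∀ u v, B.G.Adj (e u) (e v) ↔ A.G.Adj u v)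
    (hcol : ∀ i v, e v ∈ B.color i ↔ v ∈ A.color i) (φ : Fml c m) (w : Fin m → A.V) :
    Sat B φ (e ∘ w) ↔ Sat A φ w := by
  induction φ with
  | eq i j => exact e.apply_eq_iff_eq
  | adj i j => exact hadj _ _
  | col i x => exact hcol _ _
  | not φ ih => exact (ih w).not
  | or φ ψ ihφ ihψ => exact (ihφ w).or (ihψ w)
  | ex φ ih =>
    show (∃ b, Sat B φ (Fin.snoc (e ∘ w) b)) ↔ ∃ a, Sat A φ (Fin.snoc w a)
    exact (e.exists_congr fun a => by rw [← Fin.comp_snoc, ih]).symm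

variable (A : CGraph c) {m : ℕ}

@[simp]
lemma sat_and (φ ψ : Fml c m) (w : Fin m → A.V) :
    Sat A (φ.and ψ) w ↔ Sat A φ w ∧ Sat A ψ w := by
  simp [Fml.and, Sat]

@[simp]
lemma sat_bot (w : Fin m → A.V) : ¬ Sat A bot w := by
  simp [bot, Sat]

@[simp]
lemma sat_iOr {k : ℕ} (φ : Fin k → Fml c m) (w : Fin m → A.V) :
    Sat A (iOr φ) w ↔ ∃ i, Sat A (φ i) w := by
  induction k with
  | zero => simp [iOr]
  | succ k ih => simp [iOr, Sat, ih, Fin.exists_fin_succ]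

end Fml

lemma mem_ballSet_one_of_adj {V : Type} {G : SimpleGraph V} {S : Set V} {u v : V} (hu : u ∈ S)
    (h : G.Adj u v) : v ∈ ballSet G 1 S :=
  ⟨u, hu, h.reachable, (dist_eq_one_iff_adj.2 h).le⟩

lemma isStronglyLocalFml_col {c : ℕ} (r : ℕ) (k : Fin c) :
    IsStronglyLocalFml r (Fml.col k 0 : Fml c 1) := by
  refine ⟨fun A v => Iff.rfl, fun A v _ i j => ?_⟩
  rw [Subsingleton.elim i j, dist_self]
  exact ⟨Reachable.refl _, Nat.zero_le r⟩

lemma copyGraph_one_adj {V : Type} (G : SimpleGraph V) (a b : V × Fin 1) :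
    (copyGraph G 1).Adj a b ↔ G.Adj a.1 b.1 := by
  refine ⟨?_, fun h => Or.inr ⟨h, Subsingleton.elim _ _⟩⟩
  rintro (⟨-, hne⟩ | ⟨h, -⟩)
  · exact absurd (Subsingleton.elim _ _) hne
  · exact h

abbrev FGraph.withColors {c : ℕ} (G : FGraph) (χ : Fin c → Set G.V) : CGraph c := ⟨G.V, G.G, χ⟩

namespace Interp

variable {c : ℕ} (I : Interp c)

def resultCongr {A B : CGraph c} (e : A.V ≃ B.V)
    (hadj : ∀ u v, B.G.Adj (e u) (e v) ↔ A.G.Adj u v)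
    (hcol : ∀ i v, e v ∈ B.color i ↔ v ∈ A.color i) : I.result A ≃g I.result B where
  toEquiv := e.subtypeEquiv fun a => by
    rw [show ![e a] = e ∘ ![a] by ext i; fin_cases i; rfl, Fml.sat_comp_equiv e hadj hcol]
  map_rel_iff' {u v} := by
    change Fml.Sat B I.η ![e u.1, e v.1] ↔ Fml.Sat A I.η ![u.1, v.1]
    rw [show ![e u.1, e v.1] = e ∘ ![u.1, v.1] by ext i; fin_cases i <;> rfl,
      Fml.sat_comp_equiv e hadj hcol]

lemma nonempty_iso_result_of_injective {A : CGraph c} {W : Type} (H : SimpleGraph W)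
    (f : W → A.V) (hf : Function.Injective f) (hν : ∀ v, Fml.Sat A I.ν ![v] ↔ v ∈ Set.range f)
    (hη : ∀ u v, Fml.Sat A I.η ![f u, f v] ↔ H.Adj u v) : Nonempty (H ≃g I.result A) := by
  have hbij : Function.Bijective fun w => (⟨f w, (hν _).2 ⟨w, rfl⟩⟩ : {v // Fml.Sat A I.ν ![v]}) :=
    ⟨fun u v huv => hf (congrArg Subtype.val huv), fun ⟨v, hv⟩ =>
      let ⟨w, hw⟩ := (hν v).1 hv; ⟨w, Subtype.ext hw⟩⟩
  exact ⟨⟨Equiv.ofBijective _ hbij, fun {u v} => hη u v⟩⟩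

end Interp

namespace Transduction

def nonCopying {c : ℕ} (I : Interp c) : Transduction := ⟨1, Nat.one_pos, c, I⟩

lemma nonCopying_mem_of_iso {c : ℕ} (I : Interp c) {G H : FGraph} (χ : Fin c → Set G.V)
    (h : Nonempty (H.G ≃g I.result (G.withColors χ))) : (nonCopying I).mem G H := by
  obtain ⟨φ⟩ := h
  exact ⟨fun i => Prod.fst ⁻¹' χ i, ⟨φ.trans (I.resultCongr (Equiv.prodUnique G.V (Fin 1)).symm
    (fun _ _ => copyGraph_one_adj G.G _ _) fun _ _ => Iff.rfl)⟩⟩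

end Transduction

namespace SimpleGraph

variable {V : Type} {n : ℕ}

def IsSoleNbrOfColor (G : SimpleGraph V) (g : V → Fin n) (x y : V) : Prop :=
  ∀ z, G.Adj y z → g z = g x → z = x

def nbrOfColorSet (H : SimpleGraph V) (g : V → Fin n) (i : Fin n) : Set V :=
  {y | ∃ u, H.Adj u y ∧ g u = i}

end SimpleGraph

namespace IsStarColoring

variable {V : Type} {G : SimpleGraph V} {n : ℕ} {g : V → Fin n}

lemma isSoleNbrOfColor_or (hg : IsStarColoring G n g) {a b : V} (hab : G.Adj a b) :
    G.IsSoleNbrOfColor g a b ∨ G.IsSoleNbrOfColor g b a := by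
  unfold IsSoleNbrOfColor
  by_contra! h
  obtain ⟨⟨z₁, hbz₁, hz₁, hz₁a⟩, ⟨z₂, haz₂, hz₂, hz₂b⟩⟩ := h
  have hz : z₂ ≠ z₁ := fun he => hg.1 a b hab (by rw [← hz₁, ← he, hz₂])
  exact hg.2 z₂ a b z₁ haz₂.symm hab hbz₁ hz₂b hz₁a.symm hz ⟨hz₂, hz₁.symm⟩

lemma adj_and_isSoleNbrOfColor_iff (hg : IsStarColoring G n g) {H : SimpleGraph V} (hHG : H ≤ G)
    (x y : V) :
    G.Adj x y ∧ (y ∈ H.nbrOfColorSet g (g x) ∧ G.IsSoleNbrOfColor g x y ∨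
      x ∈ H.nbrOfColorSet g (g y) ∧ G.IsSoleNbrOfColor g y x) ↔ H.Adj x y := by
  refine ⟨?_, fun hxy => ⟨hHG hxy, ?_⟩⟩
  · rintro ⟨-, ⟨⟨u, huy, hu⟩, hsole⟩ | ⟨⟨u, hux, hu⟩, hsole⟩⟩
    · rwa [← hsole u (hHG huy.symm) hu]
    · rw [hsole u (hHG hux.symm) hu] at hux
      exact hux.symm
  · exact (hg.isSoleNbrOfColor_or (hHG hxy)).imp (⟨⟨x, hxy, rfl⟩, ·⟩) (⟨⟨y, hxy.symm, rfl⟩, ·⟩)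

end IsStarColoring

namespace StarEncoding

open Transduction

variable {n : ℕ}

def colorIdx (i : Fin n) : Fin (n + n + 1) := Fin.castAdd 1 (Fin.castAdd n i)

def markIdx (i : Fin n) : Fin (n + n + 1) := Fin.castAdd 1 (Fin.natAdd n i)

def keepIdx (n : ℕ) : Fin (n + n + 1) := Fin.natAdd (n + n) 0

def colors {V : Type} (g : V → Fin n) (P : Fin n → Set V) (K : Set V) :
    Fin (n + n + 1) → Set V :=
  Fin.addCases (Fin.addCases (fun i => {v | g v = i}) P) fun _ => K

section colors

variable {V : Type} (g : V → Fin n) (P : Fin n → Set V) (K : Set V)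

lemma colors_colorIdx (i : Fin n) : colors g P K (colorIdx i) = {v | g v = i} := by
  simp only [colors, colorIdx, Fin.addCases_left]

lemma colors_markIdx (i : Fin n) : colors g P K (markIdx i) = P i := by
  simp only [colors, markIdx, Fin.addCases_left, Fin.addCases_right]

lemma colors_keepIdx : colors g P K (keepIdx n) = K := by
  simp only [colors, keepIdx, Fin.addCases_right]

end colors

section formulas

variable (A : CGraph (n + n + 1))

def MarkedSoleNbr (x y : A.V) : Prop :=
  ∃ i, x ∈ A.color (colorIdx i) ∧ y ∈ A.color (markIdx i) ∧
    ∀ z, A.G.Adj y z → z ∈ A.color (colorIdx i) → z = x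

def EncodedAdj (x y : A.V) : Prop :=
  x ∈ A.color (keepIdx n) ∧ y ∈ A.color (keepIdx n) ∧ A.G.Adj x y ∧
    (MarkedSoleNbr A x y ∨ MarkedSoleNbr A y x)

def markedSoleNbrFml (x y : Fin 2) : Fml (n + n + 1) 2 :=
  Fml.iOr fun i => (Fml.col (colorIdx i) x).and <| (Fml.col (markIdx i) y).and <|
    .not <| .ex <| (Fml.adj y.castSucc (Fin.last 2)).and <|
      (Fml.col (colorIdx i) (Fin.last 2)).and (.not (.eq (Fin.last 2) x.castSucc))

def encodedAdjFml (n : ℕ) : Fml (n + n + 1) 2 :=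
  (Fml.col (keepIdx n) 0).and <| (Fml.col (keepIdx n) 1).and <|
    (Fml.adj 0 1).and (.or (markedSoleNbrFml 0 1) (markedSoleNbrFml 1 0))

lemma sat_markedSoleNbrFml (x y : Fin 2) (w : Fin 2 → A.V) :
    Fml.Sat A (markedSoleNbrFml x y) w ↔ MarkedSoleNbr A (w x) (w y) := by
  simp only [markedSoleNbrFml, MarkedSoleNbr, Fml.sat_iOr, Fml.sat_and, Fml.Sat,
    Fin.snoc_castSucc, Fin.snoc_last, not_exists, not_and, not_not]

lemma sat_encodedAdjFml (w : Fin 2 → A.V) :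
    Fml.Sat A (encodedAdjFml n) w ↔ EncodedAdj A (w 0) (w 1) := by
  simp only [encodedAdjFml, EncodedAdj, Fml.sat_and, Fml.Sat, sat_markedSoleNbrFml]

end formulas

def interp (n : ℕ) : Interp (n + n + 1) where
  ν := .col (keepIdx n) 0
  η := encodedAdjFml n
  symm A u v h := by
    rw [sat_encodedAdjFml] at h ⊢
    exact ⟨h.2.1, h.1, h.2.2.1.symm, h.2.2.2.symm⟩
  irrefl A v h := by
    rw [sat_encodedAdjFml] at h
    exact h.2.2.1.ne rfl

section locality

variable {A : CGraph (n + n + 1)} {S : Set A.V}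

lemma markedSoleNbr_induce_iff {x y : S} (hS : ∀ z, A.G.Adj y z → z ∈ S) :
    MarkedSoleNbr (A.induce S) x y ↔ MarkedSoleNbr A x y := by
  refine exists_congr fun i => and_congr_right' <| and_congr_right' ⟨fun h z hyz hz => ?_, ?_⟩
  · exact congrArg Subtype.val (h ⟨z, hS z hyz⟩ hyz hz)
  · exact fun h z hyz hz => Subtype.ext (h z.1 hyz hz)

lemma encodedAdj_induce_iff {x y : S} (hx : ∀ z, A.G.Adj x z → z ∈ S)
    (hy : ∀ z, A.G.Adj y z → z ∈ S) :
    EncodedAdj (A.induce S) x y ↔ EncodedAdj A x y := by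
  simp only [EncodedAdj, markedSoleNbr_induce_iff hx, markedSoleNbr_induce_iff hy]
  rfl

lemma isStronglyLocalFml_encodedAdjFml (n : ℕ) : IsStronglyLocalFml 1 (encodedAdjFml n) := by
  refine ⟨fun A v => ?_, fun A v h i j => ?_⟩
  · refine (sat_encodedAdjFml A v).trans (Iff.trans ?_ (sat_encodedAdjFml _ _).symm)
    exact (encodedAdj_induce_iff (x := ⟨v 0, _⟩) (y := ⟨v 1, _⟩)
      (fun _ => mem_ballSet_one_of_adj (Set.mem_range_self 0))
      fun _ => mem_ballSet_one_of_adj (Set.mem_range_self 1)).symm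
  · have hadj := ((sat_encodedAdjFml A v).1 h).2.2.1
    fin_cases i <;> fin_cases j
    all_goals first
      | exact ⟨Reachable.refl _, (dist_self (G := A.G)).le.trans zero_le_one⟩
      | exact ⟨hadj.reachable, (dist_eq_one_iff_adj.2 hadj).le⟩
      | exact ⟨hadj.symm.reachable, (dist_eq_one_iff_adj.2 hadj.symm).le⟩

end locality

lemma encodedAdj_colors_iff {G : FGraph} (g : G.V → Fin n) (P : Fin n → Set G.V) (K : Set G.V)
    (x y : G.V) :
    EncodedAdj (G.withColors (colors g P K)) x y ↔ x ∈ K ∧ y ∈ K ∧ G.G.Adj x y ∧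
      (y ∈ P (g x) ∧ G.G.IsSoleNbrOfColor g x y ∨ x ∈ P (g y) ∧ G.G.IsSoleNbrOfColor g y x) := by
  simp only [EncodedAdj, MarkedSoleNbr, colors_colorIdx, colors_markIdx, colors_keepIdx,
    Set.mem_ofPred_eq, exists_eq_left', IsSoleNbrOfColor]

lemma nonCopying_interp_mem {G H : FGraph} {g : G.V → Fin n} (hg : IsStarColoring G.G n g)
    {f : H.V → G.V} (hf : Function.Injective f) (hhom : ∀ u v, H.G.Adj u v → G.G.Adj (f u) (f v)) :
    (nonCopying (interp n)).mem G H := by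
  set H' := H.G.map (⟨f, hf⟩ : H.V ↪ G.V)
  have hle : H' ≤ G.G := by
    rintro _ _ ⟨-, u, v, huv, rfl, rfl⟩
    exact hhom u v huv
  refine nonCopying_mem_of_iso _ (colors g (H'.nbrOfColorSet g) (Set.range f))
    ((interp n).nonempty_iso_result_of_injective H.G f hf (fun v => ?_) fun u v => ?_)
  · show v ∈ colors _ _ _ (keepIdx n) ↔ _
    rw [colors_keepIdx]
  · change Fml.Sat _ (encodedAdjFml n) _ ↔ _
    rw [sat_encodedAdjFml]
    simp only [Matrix.cons_val_zero, Matrix.cons_val_one, encodedAdj_colors_iff,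
      Set.mem_range_self, true_and, hg.adj_and_isSoleNbrOfColor_iff hle]
    exact map_adj_apply (f := ⟨f, hf⟩)

end StarEncoding

theorem monotone_closure_immersive_transduction (C : Set FGraph) (h : BddStarChrom C) :
    ∃ T : Transduction, T.Immersive ∧ monotoneClosure C ⊆ TImage T C := by
  obtain ⟨n, hn⟩ := h
  refine ⟨.nonCopying (StarEncoding.interp n), ⟨rfl, 1, isStronglyLocalFml_col 1 _,
    StarEncoding.isStronglyLocalFml_encodedAdjFml n⟩, ?_⟩
  rintro H ⟨G, hG, f, hf, hhom⟩
  obtain ⟨g, hg⟩ := hn G hG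
  exact ⟨G, hG, StarEncoding.nonCopying_interp_mem hg hf hhom⟩
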